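/- arXiv:2408.00187 — 7 statements merged into one kernel-verified Lean document; each statement's English description precedes it below -/
import Mathlib

section
/- For real β with 0 ≤ β ≤ 1, real x ≤ 0, and real η with 0 < η ≤ sqrt(x(x−1)/3), the function φ(β,η,x) := (β−x)/((β−x)²+η²) + (1−β−x)/((1−β−x)²+η²) attains its minimum over β ∈ [0,1] at β = 1/2; that is, φ(β,η,x) ≥ φ(1/2,η,x) for all β ∈ [0,1]. -/
/-!
Write `a = 1/2 - x` and `u = β - 1/2`, so that `φ(β,η,x) = f(a + u) + f(a - u)` with
`f t = t / (t² + η²)`. Over a common denominator the symmetric sum is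
`2a (a² + η² - u²) / (((a + u)² + η²) ((a - u)² + η²))`, and comparing it with `2 f(a)` leaves
the sign of `a u² (a² - u² - 3η²)`. For `β ∈ [0,1]` and `x ≤ 0` we have `a² - u² ≥ x (x - 1)`,
which is at least `3η²` by the hypothesis on `η`.
-/

lemma div_sq_add_sq_add_div_sq_add_sq {η : ℝ} (hη : η ≠ 0) (a u : ℝ) :
    (a + u) / ((a + u) ^ 2 + η ^ 2) + (a - u) / ((a - u) ^ 2 + η ^ 2)
      = 2 * a * (a ^ 2 + η ^ 2 - u ^ 2) / (((a + u) ^ 2 + η ^ 2) * ((a - u) ^ 2 + η ^ 2)) := by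
  have hplus : (a + u) ^ 2 + η ^ 2 ≠ 0 := by positivity
  have hminus : (a - u) ^ 2 + η ^ 2 ≠ 0 := by positivity
  rw [div_add_div _ _ hplus hminus]
  ring

lemma div_sq_add_sq_add_self_le {η a u : ℝ} (hη : η ≠ 0) (ha : 0 ≤ a)
    (hu : u ^ 2 + 3 * η ^ 2 ≤ a ^ 2) :
    a / (a ^ 2 + η ^ 2) + a / (a ^ 2 + η ^ 2)
      ≤ (a + u) / ((a + u) ^ 2 + η ^ 2) + (a - u) / ((a - u) ^ 2 + η ^ 2) := by
  have hcenter : 0 < a ^ 2 + η ^ 2 := by positivity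
  have hprod : 0 < ((a + u) ^ 2 + η ^ 2) * ((a - u) ^ 2 + η ^ 2) := by positivity
  have hgap : (a ^ 2 + η ^ 2 - u ^ 2) * (a ^ 2 + η ^ 2)
      - ((a + u) ^ 2 + η ^ 2) * ((a - u) ^ 2 + η ^ 2) = u ^ 2 * (a ^ 2 - u ^ 2 - 3 * η ^ 2) := by
    ring
  have hgap_nonneg : 0 ≤ 2 * a * (u ^ 2 * (a ^ 2 - u ^ 2 - 3 * η ^ 2)) := by
    have : 0 ≤ a ^ 2 - u ^ 2 - 3 * η ^ 2 := by linarith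
    positivity
  rw [← two_mul, ← mul_div_assoc, div_sq_add_sq_add_div_sq_add_sq hη,
    div_le_div_iff₀ hcenter hprod]
  linear_combination hgap_nonneg + 2 * a * hgap

theorem phi_min_at_half (β η x : ℝ) (hβ0 : 0 ≤ β) (hβ1 : β ≤ 1) (hx : x ≤ 0)
    (hη0 : 0 < η) (hη : η ≤ Real.sqrt (x * (x - 1) / 3)) :
    (1 / 2 - x) / ((1 / 2 - x) ^ 2 + η ^ 2) + (1 - 1 / 2 - x) / ((1 - 1 / 2 - x) ^ 2 + η ^ 2)
      ≤ (β - x) / ((β - x) ^ 2 + η ^ 2) + (1 - β - x) / ((1 - β - x) ^ 2 + η ^ 2) := by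
  have hη_sq : 3 * η ^ 2 ≤ x * (x - 1) := by
    have := (Real.le_sqrt' hη0).mp hη
    linarith
  have hβ_sq : (β - 1 / 2) ^ 2 ≤ 1 / 4 := by nlinarith
  have hu : (β - 1 / 2) ^ 2 + 3 * η ^ 2 ≤ (1 / 2 - x) ^ 2 := by linear_combination hβ_sq + hη_sq
  rw [show (1 : ℝ) - 1 / 2 - x = 1 / 2 - x by ring,
    show 1 - β - x = (1 / 2 - x) - (β - 1 / 2) by ring,
    show β - x = (1 / 2 - x) + (β - 1 / 2) by ring]
  exact div_sq_add_sq_add_self_le hη0.ne' (by linarith) hu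
end

section
/- For real β with 0 ≤ β ≤ 1, real x ≤ 0, and real η with η > sqrt(x(x−1)/3), the function φ(β,η,x) := (β−x)/((β−x)²+η²) + (1−β−x)/((1−β−x)²+η²) satisfies φ(β,η,x) ≥ φ(0,η,x) for all β ∈ [0,1]. -/
/-!
Writing `f t = t / (t ^ 2 + e)` with `e = η ^ 2`, the sum `f u + f v` depends only on `s = u + v`
and `p = u * v`. For `u = β - x`, `v = 1 - β - x` the sum `s = 1 - 2x` does not depend on `β`, while
`p = x (x - 1) + β (1 - β)` is smallest at `β = 0`. Comparing the resulting rational function of `p`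
at `q = x (x - 1)` and at `p ∈ [q, q + 1/4]` reduces to the sign of `s (p - q) L` with `L` linear in
`p`; at `p = q + 1/4` it equals `(3e - q)(e + q + 1/4)`, which is where `3η² > x (x - 1)` enters.
-/

lemma div_sq_add_add_div_sq_add {e : ℝ} (he : 0 < e) (u v : ℝ) :
    u / (u ^ 2 + e) + v / (v ^ 2 + e)
      = (u + v) * (u * v + e) / ((u * v - e) ^ 2 + e * (u + v) ^ 2) := by
  have hD : (u * v - e) ^ 2 + e * (u + v) ^ 2 = (u ^ 2 + e) * (v ^ 2 + e) := by ring
  rw [hD, div_add_div _ _ (by positivity) (by positivity)]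
  ring

lemma mul_add_div_sub_sq_add_le {e s p q : ℝ} (he : 0 < e) (hs : 0 < s) (hqp : q ≤ p)
    (hL : e * (p + q) + p * q ≤ 3 * e ^ 2 + e * s ^ 2) :
    s * (q + e) / ((q - e) ^ 2 + e * s ^ 2) ≤ s * (p + e) / ((p - e) ^ 2 + e * s ^ 2) := by
  have hD (r : ℝ) : 0 < (r - e) ^ 2 + e * s ^ 2 := by positivity
  rw [div_le_div_iff₀ (hD q) (hD p)]
  have key := mul_nonneg (mul_nonneg hs.le (sub_nonneg.2 hqp)) (sub_nonneg.2 hL)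
  linear_combination key

lemma add_mul_le_three_sq_add_of_le_three_mul {e q t : ℝ} (hq : 0 ≤ q) (he : q ≤ 3 * e)
    (ht : t ≤ 1 / 4) :
    e * ((q + t) + q) + (q + t) * q ≤ 3 * e ^ 2 + e * (1 + 4 * q) := by
  linear_combination mul_nonneg (sub_nonneg.2 he) (by linarith : 0 ≤ e + q + 1 / 4) +
    mul_nonneg (sub_nonneg.2 ht) (by linarith : 0 ≤ e + q)

theorem phi_min_at_zero (β η x : ℝ) (hβ0 : 0 ≤ β) (hβ1 : β ≤ 1) (hx : x ≤ 0)
    (hη : Real.sqrt (x * (x - 1) / 3) < η) :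
    (0 - x) / ((0 - x) ^ 2 + η ^ 2) + (1 - 0 - x) / ((1 - 0 - x) ^ 2 + η ^ 2)
      ≤ (β - x) / ((β - x) ^ 2 + η ^ 2) + (1 - β - x) / ((1 - β - x) ^ 2 + η ^ 2) := by
  set q := x * (x - 1)
  have hq : 0 ≤ q := mul_nonneg_of_nonpos_of_nonpos hx (by linarith)
  have hqη : q < 3 * η ^ 2 := by
    have := Real.lt_sq_of_sqrt_lt hη
    linarith
  have hη2 : 0 < η ^ 2 := by linarith
  rw [div_sq_add_add_div_sq_add hη2, div_sq_add_add_div_sq_add hη2]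
  have hs0 : 0 - x + (1 - 0 - x) = 1 - 2 * x := by ring
  have hs : β - x + (1 - β - x) = 1 - 2 * x := by ring
  have hp0 : (0 - x) * (1 - 0 - x) = q := by ring
  have hp : (β - x) * (1 - β - x) = q + β * (1 - β) := by ring
  rw [hs0, hs, hp0, hp]
  refine mul_add_div_sub_sq_add_le hη2 (by linarith) (by nlinarith) ?_
  have hsq : (1 - 2 * x) ^ 2 = 1 + 4 * q := by ring
  rw [hsq]
  exact add_mul_le_three_sq_add_of_le_three_mul hq hqη.le (by nlinarith [sq_nonneg (β - 1 / 2)])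
end

section
/- For real β with 0 ≤ β ≤ 1, real x ≤ 0, and real η with η > (1−2x)/(2√3), the function φ(β,η,x) := (β−x)/((β−x)²+η²) + (1−β−x)/((1−β−x)²+η²) satisfies φ(β,η,x) ≤ φ(1/2,η,x) for all β ∈ [0,1]. -/
/-!
Write `c = 1/2 - x` and `t = β - 1/2`, so that `φ(β, η, x)` is the symmetric sum
`(c + t)/((c + t)² + η²) + (c - t)/((c - t)² + η²)`. Its defect from the value at `t = 0` is
`2 c t² (3η² + t² - c²)` divided by a positive product of denominators, and the hypothesis on `η`
is exactly `c² < 3η²`.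
-/

noncomputable section

def symmPairSum (c η t : ℝ) : ℝ :=
  (c + t) / ((c + t) ^ 2 + η ^ 2) + (c - t) / ((c - t) ^ 2 + η ^ 2)

theorem symmPairSum_zero_sub {c η : ℝ} (hη : η ≠ 0) (t : ℝ) :
    symmPairSum c η 0 - symmPairSum c η t =
      2 * c * t ^ 2 * (3 * η ^ 2 + t ^ 2 - c ^ 2) /
        ((c ^ 2 + η ^ 2) * ((c + t) ^ 2 + η ^ 2) * ((c - t) ^ 2 + η ^ 2)) := by
  have h₀ : c ^ 2 + η ^ 2 ≠ 0 := by positivity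
  have hp : (c + t) ^ 2 + η ^ 2 ≠ 0 := by positivity
  have hm : (c - t) ^ 2 + η ^ 2 ≠ 0 := by positivity
  simp only [symmPairSum, add_zero, sub_zero]
  field_simp
  ring

theorem symmPairSum_le_symmPairSum_zero {c η : ℝ} (hc : 0 ≤ c) (hcη : c ^ 2 ≤ 3 * η ^ 2)
    (hη : η ≠ 0) (t : ℝ) : symmPairSum c η t ≤ symmPairSum c η 0 := by
  rw [← sub_nonneg, symmPairSum_zero_sub hη]
  have : 0 ≤ 3 * η ^ 2 + t ^ 2 - c ^ 2 := by nlinarith [sq_nonneg t]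
  positivity

end

theorem phi_max_at_half_general (β η x : ℝ) (hx : x ≤ 0)
    (hη : (1 - 2 * x) / (2 * Real.sqrt 3) < η) :
    (β - x) / ((β - x) ^ 2 + η ^ 2) + (1 - β - x) / ((1 - β - x) ^ 2 + η ^ 2)
      ≤ (1 / 2 - x) / ((1 / 2 - x) ^ 2 + η ^ 2) + (1 - 1 / 2 - x) / ((1 - 1 / 2 - x) ^ 2 + η ^ 2) := by
  have hc : 0 < 1 / 2 - x := by linarith
  have hcη : 1 / 2 - x < Real.sqrt 3 * η := by
    rwa [show (1 - 2 * x) / (2 * Real.sqrt 3) = (1 / 2 - x) / Real.sqrt 3 by field_simp,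
      div_lt_iff₀' (by positivity)] at hη
  have hη0 : 0 < η := pos_of_mul_pos_right (hc.trans hcη) (Real.sqrt_nonneg 3)
  have hsq : (1 / 2 - x) ^ 2 ≤ 3 * η ^ 2 := by
    calc (1 / 2 - x) ^ 2 ≤ (Real.sqrt 3 * η) ^ 2 := pow_le_pow_left₀ hc.le hcη.le 2
      _ = 3 * η ^ 2 := by rw [mul_pow, Real.sq_sqrt (by norm_num)]
  have key := symmPairSum_le_symmPairSum_zero hc.le hsq hη0.ne' (β - 1 / 2)
  convert key using 2 <;> simp only [symmPairSum] <;> ring_nf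

theorem phi_max_at_half (β η x : ℝ) (hβ0 : 0 ≤ β) (hβ1 : β ≤ 1) (hx : x ≤ 0)
    (hη : (1 - 2 * x) / (2 * Real.sqrt 3) < η) :
    (β - x) / ((β - x) ^ 2 + η ^ 2) + (1 - β - x) / ((1 - β - x) ^ 2 + η ^ 2)
      ≤ (1 / 2 - x) / ((1 / 2 - x) ^ 2 + η ^ 2) + (1 - 1 / 2 - x) / ((1 - 1 / 2 - x) ^ 2 + η ^ 2) :=
  phi_max_at_half_general β η x hx hη
end

section
/- For real x ≤ 0 and real u > (2−2x)/(2√3), the function u ↦ ∂φ/∂u(0,u,x) is increasing, where φ(0,u,x) = (−x)/(x²+u²) + (1−x)/((1−x)²+u²); equivalently, the second u-derivative 2x(x²−3u²)/(x²+u²)³ + 2(x−1)((x−1)²−3u²)/((x−1)²+u²)³ is positive for such u. -/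
/-! Each summand of `φ(0, u, x)` has the form `a / (a ^ 2 + u ^ 2)` with `a = -x` or `a = 1 - x`,
whose second `u`-derivative is `2 a (3 u ^ 2 - a ^ 2) / (a ^ 2 + u ^ 2) ^ 3`. For `x ≤ 0` both
`a` are nonnegative, and `u > (1 - x) / √3` gives `x ^ 2 ≤ (1 - x) ^ 2 < 3 u ^ 2`, so both
summands are nonnegative and the second one is positive. -/

theorem hasDerivAt_div_sq_add_sq (a v : ℝ) :
    HasDerivAt (fun v : ℝ => a / (a ^ 2 + v ^ 2)) (-2 * a * v / (a ^ 2 + v ^ 2) ^ 2) v := by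
  rcases eq_or_ne a 0 with rfl | ha
  · simpa using hasDerivAt_const v (0 : ℝ)
  have hd : a ^ 2 + v ^ 2 ≠ 0 := by positivity
  have hden : HasDerivAt (fun v : ℝ => a ^ 2 + v ^ 2) (2 * v) v := by
    simpa using (hasDerivAt_pow 2 v).const_add (a ^ 2)
  refine ((hasDerivAt_const v a).div hden hd).congr_deriv ?_
  field_simp
  ring

theorem hasDerivAt_deriv_div_sq_add_sq (a v : ℝ) :
    HasDerivAt (fun v : ℝ => -2 * a * v / (a ^ 2 + v ^ 2) ^ 2)
      (-2 * a * (a ^ 2 - 3 * v ^ 2) / (a ^ 2 + v ^ 2) ^ 3) v := by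
  rcases eq_or_ne a 0 with rfl | ha
  · simpa using hasDerivAt_const v (0 : ℝ)
  have hd : a ^ 2 + v ^ 2 ≠ 0 := by positivity
  have hden : HasDerivAt (fun v : ℝ => (a ^ 2 + v ^ 2) ^ 2) (2 * (a ^ 2 + v ^ 2) * (2 * v)) v := by
    refine (((hasDerivAt_pow 2 v).const_add (a ^ 2)).pow 2).congr_deriv ?_
    ring
  have hnum : HasDerivAt (fun v : ℝ => -2 * a * v) (-2 * a) v := by
    simpa using (hasDerivAt_id v).const_mul (-2 * a)
  refine (hnum.div hden (pow_ne_zero 2 hd)).congr_deriv ?_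
  field_simp
  ring

theorem hasDerivAt_deriv_div_sq_add_sq_add (a b u : ℝ) :
    HasDerivAt (deriv fun v : ℝ => a / (a ^ 2 + v ^ 2) + b / (b ^ 2 + v ^ 2))
      (-2 * a * (a ^ 2 - 3 * u ^ 2) / (a ^ 2 + u ^ 2) ^ 3
        + -2 * b * (b ^ 2 - 3 * u ^ 2) / (b ^ 2 + u ^ 2) ^ 3) u := by
  have hderiv : (deriv fun v : ℝ => a / (a ^ 2 + v ^ 2) + b / (b ^ 2 + v ^ 2))
      = fun v => -2 * a * v / (a ^ 2 + v ^ 2) ^ 2 + -2 * b * v / (b ^ 2 + v ^ 2) ^ 2 :=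
    funext fun v => ((hasDerivAt_div_sq_add_sq a v).add (hasDerivAt_div_sq_add_sq b v)).deriv
  rw [hderiv]
  exact (hasDerivAt_deriv_div_sq_add_sq a u).add (hasDerivAt_deriv_div_sq_add_sq b u)

theorem neg_two_mul_mul_sub_div_nonneg {a v : ℝ} (ha : 0 ≤ a) (hav : a ^ 2 ≤ 3 * v ^ 2) :
    0 ≤ -2 * a * (a ^ 2 - 3 * v ^ 2) / (a ^ 2 + v ^ 2) ^ 3 :=
  div_nonneg (by nlinarith) (by positivity)

theorem neg_two_mul_mul_sub_div_pos {a v : ℝ} (ha : 0 < a) (hav : a ^ 2 < 3 * v ^ 2) :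
    0 < -2 * a * (a ^ 2 - 3 * v ^ 2) / (a ^ 2 + v ^ 2) ^ 3 :=
  div_pos (by nlinarith) (by positivity)

theorem phi_zero_second_deriv_pos (x u : ℝ) (hx : x ≤ 0)
    (hu : (2 - 2 * x) / (2 * Real.sqrt 3) < u) :
    deriv (deriv (fun v : ℝ => (-x) / (x ^ 2 + v ^ 2) + (1 - x) / ((1 - x) ^ 2 + v ^ 2))) u
      = 2 * x * (x ^ 2 - 3 * u ^ 2) / (x ^ 2 + u ^ 2) ^ 3
        + 2 * (x - 1) * ((x - 1) ^ 2 - 3 * u ^ 2) / ((x - 1) ^ 2 + u ^ 2) ^ 3 ∧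
    0 < 2 * x * (x ^ 2 - 3 * u ^ 2) / (x ^ 2 + u ^ 2) ^ 3
        + 2 * (x - 1) * ((x - 1) ^ 2 - 3 * u ^ 2) / ((x - 1) ^ 2 + u ^ 2) ^ 3 := by
  have hsecond := (hasDerivAt_deriv_div_sq_add_sq_add (-x) (1 - x) u).deriv
  simp only [neg_sq] at hsecond
  have hformula : -2 * -x * (x ^ 2 - 3 * u ^ 2) / (x ^ 2 + u ^ 2) ^ 3
      + -2 * (1 - x) * ((1 - x) ^ 2 - 3 * u ^ 2) / ((1 - x) ^ 2 + u ^ 2) ^ 3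
      = 2 * x * (x ^ 2 - 3 * u ^ 2) / (x ^ 2 + u ^ 2) ^ 3
        + 2 * (x - 1) * ((x - 1) ^ 2 - 3 * u ^ 2) / ((x - 1) ^ 2 + u ^ 2) ^ 3 := by
    rw [← neg_sub x 1, neg_sq]
    ring
  refine ⟨hsecond.trans hformula, hformula ▸ ?_⟩
  have hu' : (1 - x) ^ 2 < 3 * u ^ 2 := by
    rw [div_lt_iff₀ (by positivity)] at hu
    nlinarith [Real.sq_sqrt (show (0 : ℝ) ≤ 3 by norm_num), Real.sqrt_nonneg 3]
  have hleft := neg_two_mul_mul_sub_div_nonneg (v := u) (neg_nonneg.mpr hx) (by nlinarith)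
  have hright := neg_two_mul_mul_sub_div_pos (v := u) (by linarith : 0 < 1 - x) hu'
  rw [neg_sq] at hleft
  linarith
end

section
/- Let x < 0 and u > 1 − x. Then 0 ≤ [arctan(u/(1−x)) − arctan(u/x)] − [π − (1−2x)/u] ≤ ((1−x)³ − x³)/(3u³). -/
/-!
Write `p = (1 - x) / u` and `q = -x / u`, both positive. Since `arctan t⁻¹ = π / 2 - arctan t`
for `t > 0`, the quantity to bound is `(p - arctan p) + (q - arctan q)`, and each summand lies
in `[0, t ^ 3 / 3]` by the first two terms of the alternating Taylor series of `arctan`.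
-/

open Real

namespace Real

theorem arctan_le_self {t : ℝ} (ht : 0 ≤ t) : arctan t ≤ t := by
  have h := le_tan (arctan_nonneg.mpr ht) (arctan_lt_pi_div_two t)
  rwa [tan_arctan] at h

/-- `arctan t - t + t ^ 3 / 3` has derivative `t ^ 4 / (1 + t ^ 2) ≥ 0`. -/
theorem monotone_arctan_sub_self_add_pow_three_div_three :
    Monotone fun t : ℝ => arctan t - t + t ^ 3 / 3 := by
  have hderiv (t : ℝ) :
      HasDerivAt (fun t : ℝ => arctan t - t + t ^ 3 / 3) (t ^ 4 / (1 + t ^ 2)) t := by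
    have h : HasDerivAt (fun t : ℝ => arctan t - t + t ^ 3 / 3)
        (1 / (1 + t ^ 2) * 1 - 1 + (3 : ℕ) * t ^ (3 - 1) / 3) t :=
      ((hasDerivAt_id' t).arctan.fun_sub (hasDerivAt_id' t)).fun_add
        ((hasDerivAt_pow 3 t).div_const 3)
    refine h.congr_deriv ?_
    field_simp
    ring
  refine monotone_of_deriv_nonneg (fun t => (hderiv t).differentiableAt) fun t => ?_
  rw [(hderiv t).deriv]
  positivity

theorem self_sub_pow_three_div_three_le_arctan {t : ℝ} (ht : 0 ≤ t) :
    t - t ^ 3 / 3 ≤ arctan t := by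
  have h := monotone_arctan_sub_self_add_pow_three_div_three ht
  simp only [arctan_zero] at h
  linarith

theorem arctan_inv_sub_arctan_neg_inv {p q : ℝ} (hp : 0 < p) (hq : 0 < q) :
    arctan p⁻¹ - arctan (-q)⁻¹ = π - (arctan p + arctan q) := by
  rw [arctan_inv_of_pos hp, arctan_inv_of_neg (neg_neg_of_pos hq), arctan_neg]
  ring

end Real

theorem arctan_diff_bounds (x u : ℝ) (hx : x < 0) (hu : 1 - x < u) :
    0 ≤ (Real.arctan (u / (1 - x)) - Real.arctan (u / x)) - (Real.pi - (1 - 2 * x) / u) ∧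
    (Real.arctan (u / (1 - x)) - Real.arctan (u / x)) - (Real.pi - (1 - 2 * x) / u)
      ≤ ((1 - x) ^ 3 - x ^ 3) / (3 * u ^ 3) := by
  have hu0 : 0 < u := by linarith
  set p := (1 - x) / u with hp_def
  set q := -x / u with hq_def
  have hp : 0 < p := div_pos (by linarith) hu0
  have hq : 0 < q := div_pos (by linarith) hu0
  have hangle : arctan (u / (1 - x)) - arctan (u / x) = π - (arctan p + arctan q) := by
    rw [← arctan_inv_sub_arctan_neg_inv hp hq, hp_def, hq_def, inv_div, neg_div, neg_neg,
      inv_div]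
  have hlin : (1 - 2 * x) / u = p + q := by rw [hp_def, hq_def]; ring
  have hcube : ((1 - x) ^ 3 - x ^ 3) / (3 * u ^ 3) = p ^ 3 / 3 + q ^ 3 / 3 := by
    rw [hp_def, hq_def]; field_simp; ring
  rw [hangle, hlin, hcube]
  have := arctan_le_self hp.le
  have := arctan_le_self hq.le
  have := self_sub_pow_three_div_three_le_arctan hp.le
  have := self_sub_pow_three_div_three_le_arctan hq.le
  constructor <;> linarith
end

section
/- Let x ≤ 0 and u > 1 − 2x. Then 0 ≤ 2·arctan(2u/(1−2x)) − [π − (1−2x)/u] ≤ (1−2x)³/(12u³). -/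
/-! With `s = (1 - 2x) / (2u) > 0` the quantity in question is `2 (s - arctan s)`, because
`arctan s⁻¹ = π / 2 - arctan s`. The two bounds say that the first two partial sums of
`arctan s = s - s³/3 + ⋯` lie on either side of `arctan s` for `s ≥ 0`. -/

namespace Real

theorem arctan_le_self_s11 {x : ℝ} (hx : 0 ≤ x) : arctan x ≤ x := by
  simpa only [tan_arctan] using le_tan (arctan_nonneg.2 hx) (arctan_lt_pi_div_two x)

theorem sub_pow_three_div_three_le_arctan {x : ℝ} (hx : 0 ≤ x) : x - x ^ 3 / 3 ≤ arctan x := by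
  have hderiv (t : ℝ) :
      HasDerivAt (fun t ↦ arctan t - (t - t ^ 3 / 3)) (1 / (1 + t ^ 2) - (1 - t ^ 2)) t := by
    refine ((hasDerivAt_arctan t).sub
      ((hasDerivAt_id' t).sub ((hasDerivAt_pow 3 t).div_const 3))).congr_deriv ?_
    norm_num
  have hmono : Monotone fun t ↦ arctan t - (t - t ^ 3 / 3) := by
    refine monotone_of_deriv_nonneg (fun t ↦ (hderiv t).differentiableAt) fun t ↦ ?_
    rw [(hderiv t).deriv, sub_nonneg, le_div_iff₀ (by positivity)]
    nlinarith [pow_two_nonneg (t ^ 2)]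
  simpa only [arctan_zero, sub_nonneg, zero_pow three_ne_zero, zero_div, sub_zero] using hmono hx

theorem two_mul_arctan_inv_sub_bounds {s : ℝ} (hs : 0 < s) :
    0 ≤ 2 * arctan s⁻¹ - (π - 2 * s) ∧ 2 * arctan s⁻¹ - (π - 2 * s) ≤ 2 * s ^ 3 / 3 := by
  rw [arctan_inv_of_pos hs]
  constructor <;> linarith [arctan_le_self_s11 hs.le, sub_pow_three_div_three_le_arctan hs.le]

end Real

theorem arctan_half_bounds (x u : ℝ) (hx : x ≤ 0) (hu : 1 - 2 * x < u) :
    0 ≤ 2 * Real.arctan (2 * u / (1 - 2 * x)) - (Real.pi - (1 - 2 * x) / u) ∧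
    2 * Real.arctan (2 * u / (1 - 2 * x)) - (Real.pi - (1 - 2 * x) / u)
      ≤ (1 - 2 * x) ^ 3 / (12 * u ^ 3) := by
  have ha : 0 < 1 - 2 * x := by linarith
  have hu0 : 0 < u := ha.trans hu
  have hs : 0 < (1 - 2 * x) / (2 * u) := by positivity
  have hinv : ((1 - 2 * x) / (2 * u))⁻¹ = 2 * u / (1 - 2 * x) := inv_div _ _
  have hlin : (1 - 2 * x) / u = 2 * ((1 - 2 * x) / (2 * u)) := by field_simp
  have hcube : (1 - 2 * x) ^ 3 / (12 * u ^ 3) = 2 * ((1 - 2 * x) / (2 * u)) ^ 3 / 3 := by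
    field_simp
    ring
  rw [hlin, hcube, ← hinv]
  exact Real.two_mul_arctan_inv_sub_bounds hs
end

section
/- Let K ≥ 18 be an integer and δ < 0 a real number. Suppose ψ(u) = Σ_{k ≤ u} Λ(k) (Chebyshev function, Λ the von Mangoldt function) satisfies u(1 − 2.85/log K) ≤ ψ(u) ≤ u(1 + 2.85/log K) for all u ≥ K. Then the tail Σ_{k > K} Λ(k)/k^{1−δ} is at most (K^δ/δ)·(2.85·(2δ−1)/log K − 1) in absolute value; i.e., |Σ_{k>K} Λ(k) k^{δ−1}| < (K^δ/δ)(2.85(2δ−1)/log K − 1). -/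
open ArithmeticFunction Chebyshev Finset MeasureTheory

/-!
Abel summation with weight `t ^ (δ - 1)`, started at a point `x ∈ (K, K + 1)` where `ψ x = ψ K`,
and the bound `ψ t ≤ (1 + c) t` on `[x, b]` (with `c = 2.85 / log K`) give
`∑_{K < k ≤ b} Λ k k^(δ-1) ≤ (1 + c) b^δ / δ - x^(δ-1) ψ K - (1 - δ)(1 + c) x^δ / δ`,
where the first term is negative. With `ψ K ≥ (1 - c) K`, the right-hand side at `x = K` is
exactly the claimed constant, and for `x > K` it is strictly smaller by Bernoulli's inequality
`(x / K) ^ (1 - δ) > δ + (1 - δ) x / K`; this is where the strict inequality comes from.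
-/

section AbelSummation

variable (a : ℕ → ℝ) {δ x b : ℝ}

theorem sum_div_rpow_eq (hx : 0 < x) (hxb : x ≤ b) :
    ∑ k ∈ Ioc ⌊x⌋₊ ⌊b⌋₊, a k / (k : ℝ) ^ (1 - δ) =
      b ^ (δ - 1) * ∑ k ∈ Icc 0 ⌊b⌋₊, a k - x ^ (δ - 1) * ∑ k ∈ Icc 0 ⌊x⌋₊, a k
        + (1 - δ) * ∫ t in x..b, t ^ (δ - 2) * ∑ k ∈ Icc 0 ⌊t⌋₊, a k := by
  have hderiv : deriv (fun t : ℝ ↦ t ^ (δ - 1)) = fun t ↦ (δ - 1) * t ^ (δ - 2) := by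
    ext t; rw [Real.deriv_rpow_const]; ring_nf
  have hne : ∀ t ∈ Set.Icc x b, t ≠ 0 := fun t ht ↦ (hx.trans_le ht.1).ne'
  have habel := sum_mul_eq_sub_sub_integral_mul a hx.le hxb (f := fun t ↦ t ^ (δ - 1))
    (fun t ht ↦ Real.differentiableAt_rpow_const_of_ne _ (hne t ht))
    (by
      rw [hderiv]
      exact (continuousOn_const.mul (continuousOn_id.rpow_const fun t ht ↦
        Or.inl (hne t ht))).integrableOn_Icc)
  have hsummand (k : ℕ) : a k / (k : ℝ) ^ (1 - δ) = (k : ℝ) ^ (δ - 1) * a k := by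
    rw [div_eq_inv_mul, ← Real.rpow_neg k.cast_nonneg, neg_sub]
  simp only [hsummand, habel, hderiv, ← intervalIntegral.integral_of_le hxb, mul_assoc,
    intervalIntegral.integral_const_mul]
  ring

theorem integral_rpow_mul_sum_le {C : ℝ} (hδ : δ ≠ 0) (hx : 0 < x) (hxb : x ≤ b)
    (hC : ∀ t ∈ Set.Icc x b, ∑ k ∈ Icc 0 ⌊t⌋₊, a k ≤ C * t) :
    ∫ t in x..b, t ^ (δ - 2) * ∑ k ∈ Icc 0 ⌊t⌋₊, a k ≤ C * ((b ^ δ - x ^ δ) / δ) := by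
  have hpow : ContinuousOn (fun t : ℝ ↦ t ^ (δ - 2)) (Set.Icc x b) :=
    continuousOn_id.rpow_const fun t ht ↦ Or.inl (hx.trans_le ht.1).ne'
  have h0 : (0 : ℝ) ∉ Set.uIcc x b := Set.notMem_uIcc_of_lt hx (hx.trans_le hxb)
  have hint : ∫ t in x..b, t ^ (δ - 1) = (b ^ δ - x ^ δ) / δ := by
    rw [integral_rpow (Or.inr ⟨by simpa [sub_eq_zero] using hδ, h0⟩), sub_add_cancel]
  rw [← hint, ← intervalIntegral.integral_const_mul]
  refine intervalIntegral.integral_mono_on hxb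
    ((intervalIntegrable_iff_integrableOn_Icc_of_le hxb).mpr
      (integrableOn_mul_sum_Icc a hx.le hpow.integrableOn_Icc))
    ((intervalIntegral.intervalIntegrable_rpow (Or.inr h0)).const_mul C) fun t ht ↦ ?_
  have ht0 : 0 < t := hx.trans_le ht.1
  calc t ^ (δ - 2) * ∑ k ∈ Icc 0 ⌊t⌋₊, a k ≤ t ^ (δ - 2) * (C * t) :=
        mul_le_mul_of_nonneg_left (hC t ht) (Real.rpow_nonneg ht0.le _)
    _ = C * t ^ (δ - 1) := by
        rw [show δ - 1 = δ - 2 + 1 by ring, Real.rpow_add_one ht0.ne']; ring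

theorem sum_div_rpow_le {C : ℝ} (hδ : δ < 0) (hx : 0 < x) (hxb : x ≤ b) (hC0 : 0 ≤ C)
    (hC : ∀ t ∈ Set.Icc x b, ∑ k ∈ Icc 0 ⌊t⌋₊, a k ≤ C * t) :
    ∑ k ∈ Ioc ⌊x⌋₊ ⌊b⌋₊, a k / (k : ℝ) ^ (1 - δ) ≤
      -(x ^ (δ - 1) * ∑ k ∈ Icc 0 ⌊x⌋₊, a k + (1 - δ) * C * x ^ δ / δ) := by
  have hb : 0 < b := hx.trans_le hxb
  have hend : b ^ (δ - 1) * ∑ k ∈ Icc 0 ⌊b⌋₊, a k ≤ C * b ^ δ := by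
    calc b ^ (δ - 1) * ∑ k ∈ Icc 0 ⌊b⌋₊, a k ≤ b ^ (δ - 1) * (C * b) :=
          mul_le_mul_of_nonneg_left (hC b ⟨hxb, le_rfl⟩) (Real.rpow_nonneg hb.le _)
      _ = C * b ^ δ := by
          rw [show δ = δ - 1 + 1 by ring, Real.rpow_add_one hb.ne', sub_add_cancel]; ring
  have hint := mul_le_mul_of_nonneg_left (integral_rpow_mul_sum_le a hδ.ne hx hxb hC)
    (sub_nonneg.mpr (hδ.le.trans zero_le_one))
  have hdrop : C * b ^ δ / δ ≤ 0 :=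
    div_nonpos_of_nonneg_of_nonpos (by positivity) hδ.le
  have hsplit : C * b ^ δ + (1 - δ) * (C * ((b ^ δ - x ^ δ) / δ)) =
      C * b ^ δ / δ - (1 - δ) * C * x ^ δ / δ := by
    field_simp [hδ.ne]; ring
  rw [sum_div_rpow_eq a hx hxb]
  linarith

end AbelSummation

theorem abel_boundary_term_lt {K x δ c P : ℝ} (hK : 0 < K) (hKx : K < x) (hδ : δ < 0)
    (hc : 0 ≤ c) (hP : K * (1 - c) ≤ P) :
    -(x ^ (δ - 1) * P + (1 - δ) * (1 + c) * x ^ δ / δ) < K ^ δ / δ * (c * (2 * δ - 1) - 1) := by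
  obtain ⟨r, hr1, rfl⟩ : ∃ r, 1 < r ∧ x = r * K :=
    ⟨x / K, (one_lt_div hK).mpr hKx, (div_mul_cancel₀ _ hK.ne').symm⟩
  have hpow (y : ℝ) (hy : 0 < y) : y ^ δ = y * y ^ (δ - 1) := by
    rw [← Real.rpow_one_add' hy.le (by linarith)]; ring_nf
  rw [hpow _ (by positivity), hpow K hK, Real.mul_rpow (by linarith) hK.le]
  have hw0 : 0 < r ^ (δ - 1) := Real.rpow_pos_of_pos (by linarith) _
  have hw1 : r ^ (δ - 1) < 1 := Real.rpow_lt_one_of_one_lt_of_neg hr1 (by linarith)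
  have hbern : r ^ (δ - 1) * (δ + (1 - δ) * r) < 1 := by
    have hwr : r ^ (δ - 1) * r ^ (1 - δ) = 1 := by
      rw [← Real.rpow_add (by linarith)]; simp
    have := one_add_mul_self_lt_rpow_one_add (s := r - 1) (p := 1 - δ) (by linarith)
      (by linarith) (by linarith)
    rw [add_sub_cancel] at this
    nlinarith
  have hv0 : 0 < K ^ (δ - 1) := Real.rpow_pos_of_pos hK _
  generalize r ^ (δ - 1) = w at *
  generalize K ^ (δ - 1) = v at *
  have hbern' : 0 < (1 + c) * K * v * (1 - w * (δ + (1 - δ) * r)) := by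
    have : 0 < 1 - w * (δ + (1 - δ) * r) := by linarith
    positivity
  have hP' : 0 ≤ -δ * w * v * (P - K * (1 - c)) := by
    have : 0 ≤ P - K * (1 - c) := by linarith
    have : 0 ≤ -δ := by linarith
    positivity
  have hw' : 0 ≤ -δ * c * K * v * (1 - w) := by
    have : 0 ≤ 1 - w := by linarith
    have : 0 ≤ -δ := by linarith
    positivity
  rw [div_mul_eq_mul_div, lt_div_iff_of_neg hδ, neg_mul, add_mul, div_mul_cancel₀ _ hδ.ne]
  -- the difference of the two sides is `hbern' + hP' + 2 * hw'`
  linarith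

theorem tsum_ite_lt_le_of_sum_Ioc_le {f : ℕ → ℝ} {K M : ℕ} {B : ℝ} (hf : ∀ k, 0 ≤ f k)
    (h : ∀ N, M ≤ N → ∑ k ∈ Ioc K N, f k ≤ B) :
    ∑' k, (if K < k then f k else 0) ≤ B := by
  have hg (k : ℕ) : 0 ≤ if K < k then f k else 0 := by
    split_ifs
    exacts [hf k, le_rfl]
  refine Real.tsum_le_of_sum_range_le hg fun n ↦ ?_
  calc ∑ k ∈ range n, (if K < k then f k else 0)
      ≤ ∑ k ∈ range (max n M + 1), (if K < k then f k else 0) :=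
        sum_le_sum_of_subset_of_nonneg (range_subset_range.mpr (by omega)) fun k _ _ ↦ hg k
    _ = ∑ k ∈ Ioc K (max n M), f k := by
        rw [← sum_filter]
        congr 1
        ext k
        simp only [mem_filter, mem_range, mem_Ioc]
        omega
    _ ≤ B := h _ (le_max_right _ _)

theorem vonMangoldt_tail_bound (K : ℕ) (hK : 18 ≤ K) (δ : ℝ) (hδ : δ < 0)
    (hψ : ∀ u : ℝ, (K : ℝ) ≤ u →
      u * (1 - 2.85 / Real.log K) ≤ ∑ k ∈ Finset.Icc 1 ⌊u⌋₊, Λ k ∧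
      ∑ k ∈ Finset.Icc 1 ⌊u⌋₊, Λ k ≤ u * (1 + 2.85 / Real.log K)) :
    |∑' k : ℕ, (if K < k then Λ k / (k : ℝ) ^ (1 - δ) else 0)|
      < (K : ℝ) ^ δ / δ * (2.85 * (2 * δ - 1) / Real.log K - 1) := by
  set c := 2.85 / Real.log K
  have hc : 0 ≤ c := div_nonneg (by norm_num) (Real.log_natCast_nonneg K)
  replace hψ (u : ℝ) (hu : (K : ℝ) ≤ u) : u * (1 - c) ≤ ψ u ∧ ψ u ≤ u * (1 + c) := by
    simpa only [psi, ← Icc_add_one_left_eq_Ioc, zero_add] using hψ u hu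
  set x : ℝ := K + 1 / 2 with hx_def
  have hx : ⌊x⌋₊ = K := Nat.floor_eq_iff (by positivity) |>.mpr ⟨by linarith, by linarith⟩
  have hpartial (N : ℕ) (hN : K + 1 ≤ N) : ∑ k ∈ Ioc K N, Λ k / (k : ℝ) ^ (1 - δ) ≤
      -(x ^ (δ - 1) * ψ x + (1 - δ) * (1 + c) * x ^ δ / δ) := by
    have hxN : x ≤ N := by
      have : ((K + 1 : ℕ) : ℝ) ≤ N := by exact_mod_cast hN
      push_cast at this
      linarith
    have := sum_div_rpow_le (fun k ↦ Λ k) hδ (by positivity) hxN (by positivity)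
      fun t ht ↦ psi_eq_sum_Icc t ▸ mul_comm t _ ▸ (hψ t (by linarith [ht.1])).2
    rwa [Nat.floor_natCast, ← psi_eq_sum_Icc, hx] at this
  have hψx : (K : ℝ) * (1 - c) ≤ ψ x := by
    rw [psi_eq_psi_coe_floor, hx]
    exact (hψ K le_rfl).1
  have hKx : (K : ℝ) < x := by linarith
  rw [abs_of_nonneg (tsum_nonneg fun k ↦ by positivity), mul_div_right_comm]
  exact (tsum_ite_lt_le_of_sum_Ioc_le (fun k ↦ by positivity) hpartial).trans_lt
    (abel_boundary_term_lt (Nat.cast_pos.mpr (by omega)) hKx hδ hc hψx)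
end
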